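/- In the setting of the exact KL decomposition (p̃_η = softmax(log p + η(log p_r − log q)) on a finite label set), if Δγ(η) ≤ 0 and KL(π‖p_r) ≤ KL(π‖q), then KL(π ‖ p̃_η) ≤ KL(π ‖ p). -/
import Mathlib


noncomputable def softmax {C : ℕ} (z : Fin C → ℝ) : Fin C → ℝ :=
  fun i => Real.exp (z i) / ∑ j, Real.exp (z j)

/-- Kullback–Leibler divergence between finitely supported distributions. -/
noncomputable def klF {C : ℕ} (a b : Fin C → ℝ) : ℝ :=
  ∑ y, a y * Real.log (a y / b y)

theorem provable_kl_decrease {C : ℕ} (p pr q π : Fin C → ℝ)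
    (hp : ∀ y, 0 < p y) (hpsum : ∑ y, p y = 1)
    (hpr : ∀ y, 0 < pr y) (hprsum : ∑ y, pr y = 1)
    (hq : ∀ y, 0 < q y) (hqsum : ∑ y, q y = 1)
    (hπ : ∀ y, 0 < π y) (hπsum : ∑ y, π y = 1)
    (η : ℝ) (hη : η ∈ Set.Icc (0 : ℝ) 1)
    (hΔγ : Real.log (∑ y, p y * (pr y / q y) ^ η) ≤ 0)
    (hadm : klF π pr ≤ klF π q) :
    klF π (softmax (fun c => Real.log (p c) + η * (Real.log (pr c) - Real.log (q c))))
      ≤ klF π p := by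
  obtain ⟨hη0, hη1⟩ := hη
  rcases Nat.eq_zero_or_pos C with h0 | h0
  · subst h0; simp at hpsum
  haveI : Nonempty (Fin C) := ⟨⟨0, h0⟩⟩
  set f : Fin C → ℝ := fun c => Real.log (p c) + η * (Real.log (pr c) - Real.log (q c)) with hf
  have hr : ∀ y, (0:ℝ) < (pr y / q y) ^ η :=
    fun y => Real.rpow_pos_of_pos (div_pos (hpr y) (hq y)) η
  have hexp : ∀ y, Real.exp (f y) = p y * (pr y / q y) ^ η := by
    intro y
    rw [hf]
    show Real.exp (Real.log (p y) + η * (Real.log (pr y) - Real.log (q y))) = _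
    rw [Real.exp_add, Real.exp_log (hp y)]
    congr 1
    rw [← Real.log_div (hpr y).ne' (hq y).ne',
      Real.rpow_def_of_pos (div_pos (hpr y) (hq y)), mul_comm]
  set S := ∑ y, p y * (pr y / q y) ^ η with hS
  have hSpos : 0 < S :=
    Finset.sum_pos (fun y _ => mul_pos (hp y) (hr y)) Finset.univ_nonempty
  have hsum : ∑ y, Real.exp (f y) = S := by
    rw [hS]; exact Finset.sum_congr rfl fun y _ => hexp y
  have hsoft : ∀ y, softmax f y = p y * (pr y / q y) ^ η / S := by
    intro y; unfold softmax; rw [hsum, hexp y]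
  have key : klF π (softmax f) = klF π p + η * (klF π pr - klF π q) + Real.log S := by
    unfold klF
    calc ∑ y, π y * Real.log (π y / softmax f y)
        = ∑ y, (π y * Real.log (π y / p y)
            + η * (π y * Real.log (π y / pr y) - π y * Real.log (π y / q y))
            + π y * Real.log S) := by
          refine Finset.sum_congr rfl fun y _ => ?_
          rw [hsoft y, Real.log_div (hπ y).ne' (div_pos (mul_pos (hp y) (hr y)) hSpos).ne',
              Real.log_div (mul_pos (hp y) (hr y)).ne' hSpos.ne',
              Real.log_mul (hp y).ne' (hr y).ne',
              Real.log_rpow (div_pos (hpr y) (hq y)),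
              Real.log_div (hpr y).ne' (hq y).ne',
              Real.log_div (hπ y).ne' (hp y).ne',
              Real.log_div (hπ y).ne' (hpr y).ne',
              Real.log_div (hπ y).ne' (hq y).ne']
          ring
      _ = (∑ y, π y * Real.log (π y / p y))
            + η * ((∑ y, π y * Real.log (π y / pr y)) - ∑ y, π y * Real.log (π y / q y))
            + Real.log S := by
          rw [Finset.sum_add_distrib, Finset.sum_add_distrib, ← Finset.mul_sum,
              Finset.sum_sub_distrib, ← Finset.sum_mul, hπsum, one_mul]
  rw [key]
  have h1 : η * (klF π pr - klF π q) ≤ 0 :=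
    mul_nonpos_of_nonneg_of_nonpos hη0 (sub_nonpos.mpr hadm)
  have h2 : Real.log S ≤ 0 := hΔγ
  linarith
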